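/- arXiv:2503.10705 — 8 statements merged into one kernel-verified Lean document; each statement's English description precedes it below -/
import Mathlib

section
/- (Sign preservation, Lemma 1.) For every i ∈ {1,…,n}, every coordinate k, and all iteration indices j ≤ j': if δ^i_k(j) > 0 then δ^i_k(j') ≥ 0; if δ^i_k(j) < 0 then δ^i_k(j') ≤ 0; and if δ^i_k(j) = 0 then δ^i_k(j') = 0 for all j' > j. -/
/-!
One iteration replaces `δ^i_k` by `λ^i · M^i_k · U_k` with `λ^i ≥ 0`, and the mask `M^i_k` vanishes
unless `δ^i_k · U_k > 0`. Hence every iteration multiplies each coordinate by a nonnegative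
scalar (namely `λ^i U_k / δ^i_k` or `0`). The same then holds for any number of iterations, and
a nonnegative multiple can neither flip the sign of a coordinate nor revive a zero one.
-/

section NonnegMultiple

variable {R : Type*} [Semiring R] [PartialOrder R]

def NonnegMultiple (a b : R) : Prop := ∃ c : R, 0 ≤ c ∧ b = c * a

namespace NonnegMultiple

theorem eq_zero_of_eq_zero {a b : R} (h : NonnegMultiple a b) (ha : a = 0) : b = 0 := by
  obtain ⟨c, -, rfl⟩ := h
  rw [ha, mul_zero]

variable [IsOrderedRing R]

instance : Std.Refl (NonnegMultiple (R := R)) :=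
  ⟨fun a ↦ ⟨1, zero_le_one, (one_mul a).symm⟩⟩

instance : IsTrans R NonnegMultiple :=
  ⟨fun _ _ _ ⟨c, hc, hb⟩ ⟨c', hc', hd⟩ ↦ ⟨c' * c, mul_nonneg hc' hc, by rw [hd, hb, mul_assoc]⟩⟩

variable {a b : R}

theorem nonneg_of_pos (h : NonnegMultiple a b) (ha : 0 < a) : 0 ≤ b := by
  obtain ⟨c, hc, rfl⟩ := h
  exact mul_nonneg hc ha.le

theorem nonpos_of_neg (h : NonnegMultiple a b) (ha : a < 0) : b ≤ 0 := by
  obtain ⟨c, hc, rfl⟩ := h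
  exact mul_nonpos_of_nonneg_of_nonpos hc ha.le

end NonnegMultiple

end NonnegMultiple

theorem nonnegMultiple_mul_mask {R : Type*} [Field R] [LinearOrder R] [IsStrictOrderedRing R]
    {lam : R} (hlam : 0 ≤ lam) (x u : R) :
    NonnegMultiple x (lam * ((if 0 < x * u then 1 else 0) * u)) := by
  split_ifs with hxu
  · have hx : x ≠ 0 := by rintro rfl; simp at hxu
    have hux : 0 ≤ u / x := by
      rw [← mul_div_mul_left u x hx, ← sq]
      exact div_nonneg hxu.le (sq_nonneg x)
    exact ⟨lam * (u / x), mul_nonneg hlam hux, by field_simp⟩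
  · exact ⟨0, le_rfl, by ring⟩

theorem stmt1_general
    (n d : ℕ)
    (Δ : ℕ → Fin n → Fin d → ℝ)
    (U : ℕ → Fin d → ℝ)
    (M : ℕ → Fin n → Fin d → ℝ)
    (lam : ℕ → Fin n → ℝ)
    (hM : ∀ (j : ℕ) i k, M (j+1) i k = if 0 < Δ j i k * U (j+1) k then 1 else 0)
    (hlam : ∀ (j : ℕ) i,
      lam (j+1) i = (∑ k, |Δ j i k|) / (∑ k, |M (j+1) i k * U (j+1) k|))
    (hstep : ∀ (j : ℕ) i k, Δ (j+1) i k = lam (j+1) i * (M (j+1) i k * U (j+1) k)) :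
    (∀ (i : Fin n) (k : Fin d) (j j' : ℕ), j ≤ j' →
      (0 < Δ j i k → 0 ≤ Δ j' i k) ∧ (Δ j i k < 0 → Δ j' i k ≤ 0)) ∧
    (∀ (i : Fin n) (k : Fin d) (j j' : ℕ), j < j' → Δ j i k = 0 → Δ j' i k = 0) := by
  have scaled : ∀ i k j j', j ≤ j' → NonnegMultiple (Δ j i k) (Δ j' i k) := by
    intro i k j j' hjj'
    refine Nat.rel_of_forall_rel_succ_of_le NonnegMultiple (f := (Δ · i k)) (fun m ↦ ?_) hjj'
    have hlam_nonneg : 0 ≤ lam (m+1) i := by rw [hlam]; positivity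
    rw [hstep, hM]
    exact nonnegMultiple_mul_mask hlam_nonneg _ _
  exact ⟨fun i k j j' hjj' ↦ ⟨(scaled i k j j' hjj').nonneg_of_pos,
      (scaled i k j j' hjj').nonpos_of_neg⟩,
    fun i k j j' hjj' ↦ (scaled i k j j' hjj'.le).eq_zero_of_eq_zero⟩

theorem stmt1
    (n d : ℕ) (hn : 1 ≤ n) (hd : 1 ≤ d)
    (Δ : ℕ → Fin n → Fin d → ℝ)
    (γ ε U : ℕ → Fin d → ℝ)
    (M : ℕ → Fin n → Fin d → ℝ)
    (lam : ℕ → Fin n → ℝ)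
    (hγ : ∀ (j : ℕ) k, γ (j+1) k = Real.sign (∑ i, Δ j i k))
    (hε : ∀ (j : ℕ) k, γ (j+1) k ≠ 0 →
      (∃ i, Real.sign (Δ j i k) = γ (j+1) k ∧ |Δ j i k| = ε (j+1) k) ∧
      (∀ i, Real.sign (Δ j i k) = γ (j+1) k → |Δ j i k| ≤ ε (j+1) k))
    (hε0 : ∀ (j : ℕ) k, γ (j+1) k = 0 → ε (j+1) k = 0)
    (hU : ∀ (j : ℕ) k, U (j+1) k = γ (j+1) k * ε (j+1) k)
    (hM : ∀ (j : ℕ) i k, M (j+1) i k = if 0 < Δ j i k * U (j+1) k then 1 else 0)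
    (hden : ∀ (j : ℕ) i, ∑ k, |M (j+1) i k * U (j+1) k| ≠ 0)
    (hlam : ∀ (j : ℕ) i,
      lam (j+1) i = (∑ k, |Δ j i k|) / (∑ k, |M (j+1) i k * U (j+1) k|))
    (hstep : ∀ (j : ℕ) i k, Δ (j+1) i k = lam (j+1) i * (M (j+1) i k * U (j+1) k)) :
    (∀ (i : Fin n) (k : Fin d) (j j' : ℕ), j ≤ j' →
      (0 < Δ j i k → 0 ≤ Δ j' i k) ∧ (Δ j i k < 0 → Δ j' i k ≤ 0)) ∧
    (∀ (i : Fin n) (k : Fin d) (j j' : ℕ), j < j' → Δ j i k = 0 → Δ j' i k = 0) :=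
  stmt1_general n d Δ U M lam hM hlam hstep
end

section
/- Masks can only switch from 1 to 0 along iterations (the number of zero entries of each mask is nondecreasing): for every i ∈ {1,…,n}, every coordinate k, and every j ≥ 1, if M^i_k(j+1) = 1 then M^i_k(j) = 1. -/
/-! An entry that a mask switches off is set to zero by the rescaled update, and a zero entry
has zero product with the unified model, so the next mask keeps it switched off. -/

section Indicator

variable {α : Type*} [MulZeroOneClass α] {p : Prop} [Decidable p]

theorem of_ite_one_zero_eq_one [NeZero (1 : α)] (h : (if p then 1 else 0 : α) = 1) : p := by
  by_contra hp
  rw [if_neg hp] at h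
  exact zero_ne_one h

theorem ite_one_zero_eq_one_of_mul_ne_zero {c u : α}
    (h : c * ((if p then 1 else 0 : α) * u) ≠ 0) : (if p then 1 else 0 : α) = 1 := by
  by_contra hp
  rw [if_neg fun hp' => hp (if_pos hp'), zero_mul, mul_zero] at h
  exact h rfl

end Indicator

theorem stmt5_general
    (n d : ℕ)
    (Δ : ℕ → Fin n → Fin d → ℝ)
    (U : ℕ → Fin d → ℝ)
    (M : ℕ → Fin n → Fin d → ℝ)
    (lam : ℕ → Fin n → ℝ)
    (hM : ∀ (j : ℕ) i k, M (j+1) i k = if 0 < Δ j i k * U (j+1) k then 1 else 0)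
    (hstep : ∀ (j : ℕ) i k, Δ (j+1) i k = lam (j+1) i * (M (j+1) i k * U (j+1) k)) :
    ∀ (i : Fin n) (k : Fin d) (j : ℕ), 1 ≤ j → M (j+1) i k = 1 → M j i k = 1 := by
  intro i k j hj hmask
  obtain ⟨m, rfl⟩ : ∃ m, j = m + 1 := Nat.exists_eq_add_of_le' hj
  have hpos : 0 < Δ (m + 1) i k * U (m + 2) k := of_ite_one_zero_eq_one (hM (m + 1) i k ▸ hmask)
  have hΔ : Δ (m + 1) i k ≠ 0 := left_ne_zero_of_mul hpos.ne'
  rw [hstep, hM] at hΔ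
  rw [hM]
  exact ite_one_zero_eq_one_of_mul_ne_zero hΔ

theorem stmt5
    (n d : ℕ) (hn : 1 ≤ n) (hd : 1 ≤ d)
    (Δ : ℕ → Fin n → Fin d → ℝ)
    (γ ε U : ℕ → Fin d → ℝ)
    (M : ℕ → Fin n → Fin d → ℝ)
    (lam : ℕ → Fin n → ℝ)
    (hγ : ∀ (j : ℕ) k, γ (j+1) k = Real.sign (∑ i, Δ j i k))
    (hε : ∀ (j : ℕ) k, γ (j+1) k ≠ 0 →
      (∃ i, Real.sign (Δ j i k) = γ (j+1) k ∧ |Δ j i k| = ε (j+1) k) ∧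
      (∀ i, Real.sign (Δ j i k) = γ (j+1) k → |Δ j i k| ≤ ε (j+1) k))
    (hε0 : ∀ (j : ℕ) k, γ (j+1) k = 0 → ε (j+1) k = 0)
    (hU : ∀ (j : ℕ) k, U (j+1) k = γ (j+1) k * ε (j+1) k)
    (hM : ∀ (j : ℕ) i k, M (j+1) i k = if 0 < Δ j i k * U (j+1) k then 1 else 0)
    (hden : ∀ (j : ℕ) i, ∑ k, |M (j+1) i k * U (j+1) k| ≠ 0)
    (hlam : ∀ (j : ℕ) i,
      lam (j+1) i = (∑ k, |Δ j i k|) / (∑ k, |M (j+1) i k * U (j+1) k|))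
    (hstep : ∀ (j : ℕ) i k, Δ (j+1) i k = lam (j+1) i * (M (j+1) i k * U (j+1) k)) :
    ∀ (i : Fin n) (k : Fin d) (j : ℕ), 1 ≤ j → M (j+1) i k = 1 → M j i k = 1 :=
  stmt5_general n d Δ U M lam hM hstep
end

section
/- If δ^i ≠ 0 and δ^i is fully sign-consistent with the unified delta model, i.e. δ^i_k·U_k > 0 for every coordinate k with δ^i_k ≠ 0, then its rescaler satisfies λ^i ≤ 1; moreover λ^i = 1 if and only if |U_k| = |δ^i_k| for every k with δ^i_k ≠ 0. -/
/-! A coordinate with `δⁱₖ Uₖ > 0` has sign `γₖ`, so `|δⁱₖ| ≤ εₖ = |Uₖ|`, and the mask `Mⁱ`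
selects exactly the support of `δⁱ`. Hence `‖δⁱ‖₁ ≤ ‖Mⁱ ⊙ U‖₁` term by term, with equality
exactly when every term is an equality. -/

open Finset

lemma abs_le_abs_of_mul_pos_of_signed_max {ι : Type*} {x : ι → ℝ} {γ ε : ℝ}
    (hε : γ ≠ 0 → (∃ j, Real.sign (x j) = γ ∧ |x j| = ε) ∧
      ∀ j, Real.sign (x j) = γ → |x j| ≤ ε)
    {i : ι} (hi : 0 < x i * (γ * ε)) : |x i| ≤ |γ * ε| := by
  have hγ : γ ≠ 0 := by rintro rfl; simp at hi
  obtain ⟨⟨j, hj, rfl⟩, hmax⟩ := hε hγ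
  have hxj : x j ≠ 0 := by rintro h; simp [h] at hj; exact hγ hj.symm
  rcases Real.sign_apply_eq_of_ne_zero _ hxj with h | h <;> rw [h] at hj <;> subst hj
  · have hxi : x i < 0 := by nlinarith [abs_nonneg (x j)]
    simpa using hmax i (Real.sign_of_neg hxi)
  · have hxi : 0 < x i := by nlinarith [abs_nonneg (x j)]
    simpa using hmax i (Real.sign_of_pos hxi)

lemma sum_div_sum_le_one_and_eq_one_iff {ι : Type*} [Fintype ι] {f g : ι → ℝ}
    (hf : ∀ k, 0 ≤ f k) (hfg : ∀ k, f k ≤ g k) (hg : ∑ k, g k ≠ 0) :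
    (∑ k, f k) / (∑ k, g k) ≤ 1 ∧ ((∑ k, f k) / (∑ k, g k) = 1 ↔ ∀ k, f k = g k) := by
  have hsum : ∑ k, f k ≤ ∑ k, g k := sum_le_sum fun k _ => hfg k
  have hg_pos : 0 < ∑ k, g k := (hsum.trans' (sum_nonneg fun k _ => hf k)).lt_of_ne' hg
  refine ⟨(div_le_one hg_pos).2 hsum, ?_⟩
  rw [div_eq_one_iff_eq hg, sum_eq_sum_iff_of_le fun k _ => hfg k]
  simp

theorem stmt8_general
    (n d : ℕ)
    (δ : Fin n → Fin d → ℝ)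
    (γ ε U : Fin d → ℝ)
    (hε : ∀ k, γ k ≠ 0 →
      (∃ i, Real.sign (δ i k) = γ k ∧ |δ i k| = ε k) ∧
      (∀ i, Real.sign (δ i k) = γ k → |δ i k| ≤ ε k))
    (hU : ∀ k, U k = γ k * ε k)
    (M : Fin n → Fin d → ℝ)
    (hM : ∀ i k, M i k = if 0 < δ i k * U k then 1 else 0)
    (lam : Fin n → ℝ)
    (hden : ∀ i, ∑ k, |M i k * U k| ≠ 0)
    (hlam : ∀ i, lam i = (∑ k, |δ i k|) / (∑ k, |M i k * U k|)) :
    ∀ i : Fin n, δ i ≠ 0 → (∀ k, δ i k ≠ 0 → 0 < δ i k * U k) →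
      lam i ≤ 1 ∧ (lam i = 1 ↔ ∀ k, δ i k ≠ 0 → |U k| = |δ i k|) := by
  intro i _ hpos
  have hmask : ∀ k, M i k * U k = if δ i k = 0 then 0 else U k := by
    intro k
    by_cases h : δ i k = 0 <;> simp [hM, h, hpos]
  have hle : ∀ k, δ i k ≠ 0 → |δ i k| ≤ |U k| := fun k hk => by
    have hk := hpos k hk
    rw [hU] at hk ⊢
    exact abs_le_abs_of_mul_pos_of_signed_max (x := fun j => δ j k) (hε k) hk
  have hcoord : ∀ k, |δ i k| ≤ |M i k * U k| ∧
      (|δ i k| = |M i k * U k| ↔ (δ i k ≠ 0 → |U k| = |δ i k|)) := by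
    intro k
    by_cases h : δ i k = 0
    · simp [hmask, h]
    · simp only [hmask, h, if_false, ne_eq, not_false_eq_true, forall_const]
      exact ⟨hle k h, eq_comm⟩
  rw [hlam i]
  refine (sum_div_sum_le_one_and_eq_one_iff (fun k => abs_nonneg _)
    (fun k => (hcoord k).1) (hden i)).imp_right fun h => h.trans ?_
  exact forall_congr' fun k => (hcoord k).2

theorem stmt8
    (n d : ℕ) (hn : 1 ≤ n) (hd : 1 ≤ d)
    (δ : Fin n → Fin d → ℝ)
    (γ ε U : Fin d → ℝ)
    (hγ : ∀ k, γ k = Real.sign (∑ i, δ i k))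
    (hε : ∀ k, γ k ≠ 0 →
      (∃ i, Real.sign (δ i k) = γ k ∧ |δ i k| = ε k) ∧
      (∀ i, Real.sign (δ i k) = γ k → |δ i k| ≤ ε k))
    (hε0 : ∀ k, γ k = 0 → ε k = 0)
    (hU : ∀ k, U k = γ k * ε k)
    (M : Fin n → Fin d → ℝ)
    (hM : ∀ i k, M i k = if 0 < δ i k * U k then 1 else 0)
    (lam : Fin n → ℝ)
    (hden : ∀ i, ∑ k, |M i k * U k| ≠ 0)
    (hlam : ∀ i, lam i = (∑ k, |δ i k|) / (∑ k, |M i k * U k|)) :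
    ∀ i : Fin n, δ i ≠ 0 → (∀ k, δ i k ≠ 0 → 0 < δ i k * U k) →
      lam i ≤ 1 ∧ (lam i = 1 ↔ ∀ k, δ i k ≠ 0 → |U k| = |δ i k|) :=
  stmt8_general n d δ γ ε U hε hU M hM lam hden hlam
end

section
/- (Fixed-point lemma.) If δ^i ≠ 0 and δ^i agrees with the unified delta model on its support, i.e. δ^i_k = U_k for every coordinate k with δ^i_k ≠ 0, then M^i ⊙ U = δ^i, λ^i = 1, and one iteration leaves δ^i unchanged: δ̂^i = δ^i. -/
/-! On the support of `δ^i` the mask keeps exactly the coordinates where `δ^i_k = U_k`, since there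
`δ^i_k * U_k = (δ^i_k)^2 > 0`; off the support it kills `U_k`. Hence `M^i ⊙ U = δ^i`, the rescaler
is `‖δ^i‖₁ / ‖δ^i‖₁ = 1` (the norm is nonzero because `δ^i ≠ 0`), and the iteration returns `δ^i`. -/

theorem mask_mul_eq_of_agree {α : Type*} [Ring α] [LinearOrder α] [IsStrictOrderedRing α]
    {a u : α} (h : a ≠ 0 → a = u) : (if 0 < a * u then 1 else 0) * u = a := by
  by_cases ha : a = 0
  · simp [ha]
  · obtain rfl := h ha
    simp [mul_self_pos.mpr ha]

theorem sum_abs_ne_zero {ι α : Type*} [Fintype ι] [AddCommGroup α] [LinearOrder α]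
    [IsOrderedAddMonoid α] {v : ι → α} (hv : v ≠ 0) : ∑ k, |v k| ≠ 0 := by
  intro h
  refine hv (funext fun k => ?_)
  have hk := (Finset.sum_eq_zero_iff_of_nonneg fun k _ => abs_nonneg (v k)).1 h k
    (Finset.mem_univ k)
  simpa using hk

theorem stmt9_general
    (n d : ℕ)
    (δ : Fin n → Fin d → ℝ)
    (U : Fin d → ℝ)
    (M : Fin n → Fin d → ℝ)
    (hM : ∀ i k, M i k = if 0 < δ i k * U k then 1 else 0)
    (lam : Fin n → ℝ)
    (hlam : ∀ i, lam i = (∑ k, |δ i k|) / (∑ k, |M i k * U k|))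
    (δhat : Fin n → Fin d → ℝ)
    (hδhat : ∀ i k, δhat i k = lam i * (M i k * U k)) :
    ∀ i : Fin n, δ i ≠ 0 → (∀ k, δ i k ≠ 0 → δ i k = U k) →
      (∀ k, M i k * U k = δ i k) ∧ lam i = 1 ∧ δhat i = δ i := by
  intro i hne hagree
  have hmask : ∀ k, M i k * U k = δ i k := fun k => by
    rw [hM]
    exact mask_mul_eq_of_agree (hagree k)
  have hlam_one : lam i = 1 := by
    rw [hlam, Finset.sum_congr rfl fun k _ => congrArg abs (hmask k),
      div_self (sum_abs_ne_zero hne)]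
  exact ⟨hmask, hlam_one, funext fun k => by rw [hδhat, hlam_one, one_mul, hmask]⟩

theorem stmt9
    (n d : ℕ) (hn : 1 ≤ n) (hd : 1 ≤ d)
    (δ : Fin n → Fin d → ℝ)
    (γ ε U : Fin d → ℝ)
    (hγ : ∀ k, γ k = Real.sign (∑ i, δ i k))
    (hε : ∀ k, γ k ≠ 0 →
      (∃ i, Real.sign (δ i k) = γ k ∧ |δ i k| = ε k) ∧
      (∀ i, Real.sign (δ i k) = γ k → |δ i k| ≤ ε k))
    (hε0 : ∀ k, γ k = 0 → ε k = 0)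
    (hU : ∀ k, U k = γ k * ε k)
    (M : Fin n → Fin d → ℝ)
    (hM : ∀ i k, M i k = if 0 < δ i k * U k then 1 else 0)
    (lam : Fin n → ℝ)
    (hden : ∀ i, ∑ k, |M i k * U k| ≠ 0)
    (hlam : ∀ i, lam i = (∑ k, |δ i k|) / (∑ k, |M i k * U k|))
    (δhat : Fin n → Fin d → ℝ)
    (hδhat : ∀ i k, δhat i k = lam i * (M i k * U k)) :
    ∀ i : Fin n, δ i ≠ 0 → (∀ k, δ i k ≠ 0 → δ i k = U k) →
      (∀ k, M i k * U k = δ i k) ∧ lam i = 1 ∧ δhat i = δ i :=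
  stmt9_general n d δ U M hM lam hlam δhat hδhat
end

section
/- (Second-iteration unification formula.) For every coordinate k with γ_k(1) ≠ 0, the unified sign is preserved and the unified magnitude is rescaled by the largest active rescaler: γ_k(2) = γ_k(1) and ε_k(2) = ε_k(1) · max{λ^i(1) : 1 ≤ i ≤ n, M^i_k(1) = 1}, where the maximized set is nonempty. -/
/-!
After one iteration the `k`-th entries are `δ^i_k(1) = λ^i M^i_k U_k`, and a masked model has
`λ^i > 0` (numerator and denominator of its rescaler both contain a nonzero `k`-th term). So the
family `(δ^i_k(1))_i` consists of nonnegative multiples of the single number `U_k = γ_k ε_k`: its sum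
has sign `γ_k`, the entries of that sign are exactly the masked ones, and their magnitudes
`λ^i ε_k` are largest for the largest active rescaler.
-/

open Finset Real

namespace Real

theorem sign_eq_sign_iff_mul_pos {x u : ℝ} (hu : u ≠ 0) : sign x = sign u ↔ 0 < x * u := by
  rcases hu.lt_or_gt with hu | hu <;> rcases lt_trichotomy x 0 with hx | hx | hx <;>
    norm_num [sign_of_neg, sign_of_pos, hu, hx, mul_pos_iff, hu.not_gt, hx.not_gt]

theorem sign_mul_eq_sign_iff {c u : ℝ} (hu : u ≠ 0) : sign (c * u) = sign u ↔ 0 < c := by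
  rw [sign_eq_sign_iff_mul_pos hu, mul_assoc, mul_pos_iff_of_pos_right (mul_self_pos.2 hu)]

theorem sign_sign_mul_of_pos (x : ℝ) {e : ℝ} (he : 0 < e) : sign (sign x * e) = sign x := by
  rcases sign_apply_eq x with h | h | h <;> simp [h, sign_of_neg, sign_of_pos, he]

theorem abs_sign_of_ne_zero {x : ℝ} (hx : x ≠ 0) : |sign x| = 1 := by
  rcases sign_apply_eq_of_ne_zero x hx with h | h <;> simp [h]

end Real

section OneSignedFamily

variable {ι : Type*} {c : ι → ℝ} {u : ℝ}

theorem sign_sum_mul_of_nonneg [Fintype ι] (hc : ∀ i, 0 ≤ c i) (hpos : ∃ i, 0 < c i)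
    (hu : u ≠ 0) : sign (∑ i, c i * u) = sign u := by
  rw [← sum_mul, sign_mul_eq_sign_iff hu]
  obtain ⟨i, hi⟩ := hpos
  exact sum_pos' (fun i _ => hc i) ⟨i, mem_univ i, hi⟩

/-- The paper's `ε_k` is the `e` with `IsMaxAbsOfSign (fun i ↦ δ^i_k) γ_k e`. -/
def IsMaxAbsOfSign (x : ι → ℝ) (s e : ℝ) : Prop :=
  (∃ i, sign (x i) = s ∧ |x i| = e) ∧ ∀ i, sign (x i) = s → |x i| ≤ e

theorem IsMaxAbsOfSign.pos {x : ι → ℝ} {s e : ℝ} (h : IsMaxAbsOfSign x s e) (hs : s ≠ 0) :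
    0 < e := by
  obtain ⟨⟨i, hi, rfl⟩, -⟩ := h
  refine abs_pos.2 fun hx => hs ?_
  rw [← hi, hx, sign_zero]

theorem IsMaxAbsOfSign.sign_sign_mul_and_abs_sign_mul {x : ι → ℝ} {σ e : ℝ}
    (h : IsMaxAbsOfSign x (sign σ) e) (hσ : σ ≠ 0) :
    sign (sign σ * e) = sign σ ∧ |sign σ * e| = e := by
  have he := h.pos (sign_eq_zero_iff.not.2 hσ)
  refine ⟨sign_sign_mul_of_pos σ he, ?_⟩
  rw [abs_mul, abs_sign_of_ne_zero hσ, abs_of_pos he, one_mul]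

theorem IsMaxAbsOfSign.exists_eq_mul_abs_of_nonneg {e : ℝ} (hc : ∀ i, 0 ≤ c i) (hu : u ≠ 0)
    (h : IsMaxAbsOfSign (fun i => c i * u) (sign u) e) :
    ∃ i, 0 < c i ∧ e = c i * |u| ∧ ∀ i', 0 < c i' → c i' ≤ c i := by
  obtain ⟨⟨i, hi, rfl⟩, hmax⟩ := h
  have abs_eq (i : ι) : |c i * u| = c i * |u| := by rw [abs_mul, abs_of_nonneg (hc i)]
  refine ⟨i, (sign_mul_eq_sign_iff hu).1 hi, abs_eq i, fun i' hi' => ?_⟩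
  have := hmax i' ((sign_mul_eq_sign_iff hu).2 hi')
  rw [abs_eq, abs_eq] at this
  exact le_of_mul_le_mul_right this (abs_pos.2 hu)

end OneSignedFamily

theorem sum_abs_div_sum_abs_pos {κ : Type*} [Fintype κ] {x y : κ → ℝ} {k : κ} (hx : x k ≠ 0)
    (hy : y k ≠ 0) : 0 < (∑ i, |x i|) / ∑ i, |y i| := by
  have sum_abs_pos {z : κ → ℝ} (hz : z k ≠ 0) : 0 < ∑ i, |z i| :=
    (abs_pos.2 hz).trans_le (single_le_sum (fun i _ => abs_nonneg (z i)) (mem_univ k))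
  exact div_pos (sum_abs_pos hx) (sum_abs_pos hy)

section MaskedRescaling

variable {ι κ : Type*} {δ M : ι → κ → ℝ} {U : κ → ℝ} {lam : ι → ℝ}

theorem mask_eq_one_iff (hM : ∀ i k, M i k = if 0 < δ i k * U k then 1 else 0) (i : ι) (k : κ) :
    M i k = 1 ↔ 0 < δ i k * U k := by
  rw [hM]
  split_ifs with h <;> simp [h]

theorem rescaler_mul_mask_nonneg_and_pos_iff [Fintype κ]
    (hM : ∀ i k, M i k = if 0 < δ i k * U k then 1 else 0)
    (hlam : ∀ i, lam i = (∑ k, |δ i k|) / ∑ k, |M i k * U k|) (i : ι) (k : κ) :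
    0 ≤ lam i * M i k ∧ (0 < lam i * M i k ↔ M i k = 1) := by
  by_cases hk : 0 < δ i k * U k
  · have hMk : M i k = 1 := (mask_eq_one_iff hM i k).2 hk
    have hlam_pos : 0 < lam i := by
      rw [hlam i]
      refine sum_abs_div_sum_abs_pos (k := k) (left_ne_zero_of_mul hk.ne') ?_
      rw [hMk, one_mul]
      exact right_ne_zero_of_mul hk.ne'
    simp [hMk, hlam_pos, hlam_pos.le]
  · have hMk : M i k = 0 := by rw [hM, if_neg hk]
    simp [hMk]

end MaskedRescaling

theorem stmt10_general
    (n d : ℕ)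
    (Δ : ℕ → Fin n → Fin d → ℝ)
    (γ ε U : ℕ → Fin d → ℝ)
    (M : ℕ → Fin n → Fin d → ℝ)
    (lam : ℕ → Fin n → ℝ)
    (hγ : ∀ (j : ℕ) k, γ (j+1) k = Real.sign (∑ i, Δ j i k))
    (hε : ∀ (j : ℕ) k, γ (j+1) k ≠ 0 →
      (∃ i, Real.sign (Δ j i k) = γ (j+1) k ∧ |Δ j i k| = ε (j+1) k) ∧
      (∀ i, Real.sign (Δ j i k) = γ (j+1) k → |Δ j i k| ≤ ε (j+1) k))
    (hU : ∀ (j : ℕ) k, U (j+1) k = γ (j+1) k * ε (j+1) k)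
    (hM : ∀ (j : ℕ) i k, M (j+1) i k = if 0 < Δ j i k * U (j+1) k then 1 else 0)
    (hlam : ∀ (j : ℕ) i,
      lam (j+1) i = (∑ k, |Δ j i k|) / (∑ k, |M (j+1) i k * U (j+1) k|))
    (hstep : ∀ (j : ℕ) i k, Δ (j+1) i k = lam (j+1) i * (M (j+1) i k * U (j+1) k)) :
    ∀ k : Fin d, γ 1 k ≠ 0 →
      γ 2 k = γ 1 k ∧
      ∃ i : Fin n, M 1 i k = 1 ∧ ε 2 k = ε 1 k * lam 1 i ∧
        ∀ i' : Fin n, M 1 i' k = 1 → lam 1 i' ≤ lam 1 i := by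
  intro k hk
  have hσ : ∑ i, Δ 0 i k ≠ 0 := fun h => hk (by rw [hγ 0 k, h, sign_zero])
  obtain ⟨hsign_U, habs_U⟩ : sign (U 1 k) = γ 1 k ∧ |U 1 k| = ε 1 k := by
    have h : IsMaxAbsOfSign (fun i => Δ 0 i k) (γ 1 k) (ε 1 k) := hε 0 k hk
    rw [hγ 0 k] at h
    rw [hU 0 k, hγ 0 k]
    exact h.sign_sign_mul_and_abs_sign_mul hσ
  have hU_ne : U 1 k ≠ 0 := fun h => hk (by rw [← hsign_U, h, sign_zero])
  set c : Fin n → ℝ := fun i => lam 1 i * M 1 i k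
  have hc i : 0 ≤ c i ∧ (0 < c i ↔ M 1 i k = 1) :=
    rescaler_mul_mask_nonneg_and_pos_iff (hM 0) (hlam 0) i k
  have hc_eq (i : Fin n) (hi : M 1 i k = 1) : c i = lam 1 i := by simp only [c, hi, mul_one]
  have hΔ_eq (i : Fin n) : Δ 1 i k = c i * U 1 k := by rw [hstep 0 i k, mul_assoc]
  obtain ⟨⟨i₀, hi₀, -⟩, -⟩ := hε 0 k hk
  have hc_i₀ : 0 < c i₀ := by
    rw [(hc i₀).2, mask_eq_one_iff (hM 0), ← sign_eq_sign_iff_mul_pos hU_ne, hsign_U, hi₀]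
  have hγ₂ : γ 2 k = γ 1 k := by
    rw [hγ 1 k, sum_congr rfl fun i _ => hΔ_eq i,
      sign_sum_mul_of_nonneg (fun i => (hc i).1) ⟨i₀, hc_i₀⟩ hU_ne, hsign_U]
  have hmax : IsMaxAbsOfSign (fun i => c i * U 1 k) (sign (U 1 k)) (ε 2 k) := by
    have h := hε 1 k (hγ₂ ▸ hk)
    simp only [Nat.reduceAdd, hΔ_eq, hγ₂, ← hsign_U] at h
    exact h
  obtain ⟨i, hi, he, hle⟩ := hmax.exists_eq_mul_abs_of_nonneg (fun i => (hc i).1) hU_ne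
  have hMi : M 1 i k = 1 := (hc i).2.1 hi
  refine ⟨hγ₂, i, hMi, by rw [he, habs_U, hc_eq i hMi, mul_comm], fun i' hMi' => ?_⟩
  rw [← hc_eq i hMi, ← hc_eq i' hMi']
  exact hle i' ((hc i').2.2 hMi')

theorem stmt10
    (n d : ℕ) (hn : 1 ≤ n) (hd : 1 ≤ d)
    (Δ : ℕ → Fin n → Fin d → ℝ)
    (γ ε U : ℕ → Fin d → ℝ)
    (M : ℕ → Fin n → Fin d → ℝ)
    (lam : ℕ → Fin n → ℝ)
    (hγ : ∀ (j : ℕ) k, γ (j+1) k = Real.sign (∑ i, Δ j i k))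
    (hε : ∀ (j : ℕ) k, γ (j+1) k ≠ 0 →
      (∃ i, Real.sign (Δ j i k) = γ (j+1) k ∧ |Δ j i k| = ε (j+1) k) ∧
      (∀ i, Real.sign (Δ j i k) = γ (j+1) k → |Δ j i k| ≤ ε (j+1) k))
    (hε0 : ∀ (j : ℕ) k, γ (j+1) k = 0 → ε (j+1) k = 0)
    (hU : ∀ (j : ℕ) k, U (j+1) k = γ (j+1) k * ε (j+1) k)
    (hM : ∀ (j : ℕ) i k, M (j+1) i k = if 0 < Δ j i k * U (j+1) k then 1 else 0)
    (hden : ∀ (j : ℕ) i, ∑ k, |M (j+1) i k * U (j+1) k| ≠ 0)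
    (hlam : ∀ (j : ℕ) i,
      lam (j+1) i = (∑ k, |Δ j i k|) / (∑ k, |M (j+1) i k * U (j+1) k|))
    (hstep : ∀ (j : ℕ) i k, Δ (j+1) i k = lam (j+1) i * (M (j+1) i k * U (j+1) k)) :
    ∀ k : Fin d, γ 1 k ≠ 0 →
      γ 2 k = γ 1 k ∧
      ∃ i : Fin n, M 1 i k = 1 ∧ ε 2 k = ε 1 k * lam 1 i ∧
        ∀ i' : Fin n, M 1 i' k = 1 → lam 1 i' ≤ lam 1 i :=
  stmt10_general n d Δ γ ε U M lam hγ hε hU hM hlam hstep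
end

section
/- (Mask stabilization.) During the iteration of a fixed set of n delta models, the masks and unified signs are constant from the first iteration onward: for every i ∈ {1,…,n}, every coordinate k, and every j ≥ 1, M^i_k(j) = M^i_k(1) and γ_k(j) = γ_k(1). -/
/-!
After one iteration each δ^i(1) is a positive multiple of M^i(1) ⊙ U(1), so every coordinate of
δ^i(1) has sign M^i_k(1)·γ_k(1). Hence the column sum Σ_i δ^i_k(1) is a nonnegative combination of
these, with a positive coefficient wherever γ_k(1) ≠ 0, so γ(2) = γ(1); and δ^i_k(1) agrees in sign
with U_k(2) exactly where M^i_k(1) = 1, so M(2) = M(1). The same argument applies at every later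
iteration.
-/

open Finset

namespace Real

theorem sign_mul_abs (x : ℝ) : sign x * |x| = x := by
  rcases lt_trichotomy x 0 with hx | rfl | hx
  · rw [sign_of_neg hx, abs_of_neg hx]; ring
  · simp
  · rw [sign_of_pos hx, abs_of_pos hx, one_mul]

theorem sign_mul_of_pos {c : ℝ} (hc : 0 < c) (x : ℝ) : sign (c * x) = sign x := by
  rcases lt_trichotomy x 0 with hx | rfl | hx
  · rw [sign_of_neg hx, sign_of_neg (mul_neg_of_pos_of_neg hc hx)]
  · simp
  · rw [sign_of_pos hx, sign_of_pos (mul_pos hc hx)]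

theorem mul_pos_iff_sign_eq {a b : ℝ} : 0 < a * b ↔ sign a = sign b ∧ sign b ≠ 0 := by
  rw [mul_pos_iff]
  rcases lt_trichotomy a 0 with ha | rfl | ha <;> rcases lt_trichotomy b 0 with hb | rfl | hb <;>
    simp [sign_of_neg, sign_of_pos, not_lt_of_gt, *] <;> norm_num

end Real

/-- One iteration `δ ↦ δ'` of the unification procedure, together with the unified signs `γ`,
magnitudes `ε`, unified delta model `U`, masks `M` and rescalers `lam` computed from `δ`. -/
structure IsUnificationStep {ι κ : Type*} [Fintype ι] [Fintype κ] (δ : ι → κ → ℝ)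
    (γ ε U : κ → ℝ) (M : ι → κ → ℝ) (lam : ι → ℝ) (δ' : ι → κ → ℝ) : Prop where
  gamma_eq : ∀ k, γ k = Real.sign (∑ i, δ i k)
  exists_sign_eq_abs_eq : ∀ k, γ k ≠ 0 → ∃ i, Real.sign (δ i k) = γ k ∧ |δ i k| = ε k
  eps_eq_zero : ∀ k, γ k = 0 → ε k = 0
  unified_eq : ∀ k, U k = γ k * ε k
  mask_eq : ∀ i k, M i k = if 0 < δ i k * U k then 1 else 0
  norm_masked_ne_zero : ∀ i, ∑ k, |M i k * U k| ≠ 0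
  rescaler_eq : ∀ i, lam i = (∑ k, |δ i k|) / ∑ k, |M i k * U k|
  next_eq : ∀ i k, δ' i k = lam i * (M i k * U k)

namespace IsUnificationStep

variable {ι κ : Type*} [Fintype ι] [Fintype κ] {δ δ' δ'' : ι → κ → ℝ} {γ ε U γ' ε' U' : κ → ℝ}
  {M M' : ι → κ → ℝ} {lam lam' : ι → ℝ}

theorem sign_unified (h : IsUnificationStep δ γ ε U M lam δ') (k : κ) :
    Real.sign (U k) = γ k := by
  by_cases hγ : γ k = 0
  · rw [h.unified_eq, hγ, zero_mul, Real.sign_zero]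
  · obtain ⟨i, hsign, habs⟩ := h.exists_sign_eq_abs_eq k hγ
    have hU : U k = δ i k := by
      rw [h.unified_eq, ← hsign, ← habs, Real.sign_mul_abs]
    rw [hU, hsign]

theorem mask_eq_ite (h : IsUnificationStep δ γ ε U M lam δ') (i : ι) (k : κ) :
    M i k = if Real.sign (δ i k) = γ k ∧ γ k ≠ 0 then 1 else 0 := by
  simp only [h.mask_eq, Real.mul_pos_iff_sign_eq, h.sign_unified]

theorem mask_nonneg (h : IsUnificationStep δ γ ε U M lam δ') (i : ι) (k : κ) : 0 ≤ M i k := by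
  rw [h.mask_eq]
  split_ifs <;> norm_num

theorem exists_mask_eq_one (h : IsUnificationStep δ γ ε U M lam δ') {k : κ} (hk : γ k ≠ 0) :
    ∃ i, M i k = 1 := by
  obtain ⟨i, hsign, -⟩ := h.exists_sign_eq_abs_eq k hk
  exact ⟨i, by rw [h.mask_eq_ite, if_pos ⟨hsign, hk⟩]⟩

theorem rescaler_pos (h : IsUnificationStep δ γ ε U M lam δ') (i : ι) : 0 < lam i := by
  have hden : 0 < ∑ k, |M i k * U k| :=
    (sum_nonneg fun k _ ↦ abs_nonneg _).lt_of_ne' (h.norm_masked_ne_zero i)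
  -- a zero `δ i` would have an empty mask
  have hnum : 0 < ∑ k, |δ i k| := by
    refine (sum_nonneg fun k _ ↦ abs_nonneg _).lt_of_ne' fun hzero ↦ h.norm_masked_ne_zero i ?_
    have hδ : ∀ k, δ i k = 0 := fun k ↦
      abs_eq_zero.mp ((sum_eq_zero_iff_of_nonneg fun k _ ↦ abs_nonneg _).mp hzero k (mem_univ k))
    simp [h.mask_eq, hδ]
  rw [h.rescaler_eq]
  exact div_pos hnum hden

theorem sign_next (h : IsUnificationStep δ γ ε U M lam δ') (i : ι) (k : κ) :
    Real.sign (δ' i k) = M i k * γ k := by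
  rw [h.next_eq, Real.sign_mul_of_pos (h.rescaler_pos i), h.mask_eq_ite]
  split_ifs
  · rw [one_mul, one_mul, h.sign_unified]
  · rw [zero_mul, zero_mul, Real.sign_zero]

theorem gamma_next (h : IsUnificationStep δ γ ε U M lam δ')
    (h' : IsUnificationStep δ' γ' ε' U' M' lam' δ'') : γ' = γ := by
  funext k
  have hsum : ∑ i, δ' i k = (∑ i, lam i * M i k) * U k := by
    simp only [h.next_eq, sum_mul, mul_assoc]
  rw [h'.gamma_eq, hsum]
  by_cases hγ : γ k = 0
  · have hU : U k = 0 := Real.sign_eq_zero_iff.mp (hγ ▸ h.sign_unified k)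
    rw [hU, mul_zero, Real.sign_zero, hγ]
  · obtain ⟨i₀, hi₀⟩ := h.exists_mask_eq_one hγ
    have hcoeff : 0 < ∑ i, lam i * M i k :=
      sum_pos' (fun i _ ↦ mul_nonneg (h.rescaler_pos i).le (h.mask_nonneg i k))
        ⟨i₀, mem_univ _, by rw [hi₀, mul_one]; exact h.rescaler_pos i₀⟩
    rw [Real.sign_mul_of_pos hcoeff, h.sign_unified]

theorem mask_next (h : IsUnificationStep δ γ ε U M lam δ')
    (h' : IsUnificationStep δ' γ' ε' U' M' lam' δ'') : M' = M := by
  funext i k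
  rw [h'.mask_eq_ite, h.sign_next, h.gamma_next h', h.mask_eq_ite i k]
  by_cases hsign : Real.sign (δ i k) = γ k <;> simp [hsign, eq_comm]

end IsUnificationStep

theorem stmt11_general
    (n d : ℕ)
    (Δ : ℕ → Fin n → Fin d → ℝ)
    (γ ε U : ℕ → Fin d → ℝ)
    (M : ℕ → Fin n → Fin d → ℝ)
    (lam : ℕ → Fin n → ℝ)
    (hγ : ∀ (j : ℕ) k, γ (j+1) k = Real.sign (∑ i, Δ j i k))
    (hε : ∀ (j : ℕ) k, γ (j+1) k ≠ 0 →
      (∃ i, Real.sign (Δ j i k) = γ (j+1) k ∧ |Δ j i k| = ε (j+1) k) ∧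
      (∀ i, Real.sign (Δ j i k) = γ (j+1) k → |Δ j i k| ≤ ε (j+1) k))
    (hε0 : ∀ (j : ℕ) k, γ (j+1) k = 0 → ε (j+1) k = 0)
    (hU : ∀ (j : ℕ) k, U (j+1) k = γ (j+1) k * ε (j+1) k)
    (hM : ∀ (j : ℕ) i k, M (j+1) i k = if 0 < Δ j i k * U (j+1) k then 1 else 0)
    (hden : ∀ (j : ℕ) i, ∑ k, |M (j+1) i k * U (j+1) k| ≠ 0)
    (hlam : ∀ (j : ℕ) i,
      lam (j+1) i = (∑ k, |Δ j i k|) / (∑ k, |M (j+1) i k * U (j+1) k|))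
    (hstep : ∀ (j : ℕ) i k, Δ (j+1) i k = lam (j+1) i * (M (j+1) i k * U (j+1) k)) :
    ∀ (i : Fin n) (k : Fin d) (j : ℕ), 1 ≤ j →
      M j i k = M 1 i k ∧ γ j k = γ 1 k := by
  have step (j : ℕ) : IsUnificationStep (Δ j) (γ (j+1)) (ε (j+1)) (U (j+1)) (M (j+1))
      (lam (j+1)) (Δ (j+1)) :=
    ⟨hγ j, fun k hk ↦ (hε j k hk).1, hε0 j, hU j, hM j, hden j, hlam j, hstep j⟩
  intro i k j hj
  induction j, hj using Nat.le_induction with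
  | base => exact ⟨rfl, rfl⟩
  | succ j hj ih =>
    obtain ⟨j, rfl⟩ := Nat.exists_eq_add_of_le' hj
    rw [(step j).mask_next (step (j+1)), (step j).gamma_next (step (j+1))]
    exact ih

theorem stmt11
    (n d : ℕ) (hn : 1 ≤ n) (hd : 1 ≤ d)
    (Δ : ℕ → Fin n → Fin d → ℝ)
    (γ ε U : ℕ → Fin d → ℝ)
    (M : ℕ → Fin n → Fin d → ℝ)
    (lam : ℕ → Fin n → ℝ)
    (hγ : ∀ (j : ℕ) k, γ (j+1) k = Real.sign (∑ i, Δ j i k))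
    (hε : ∀ (j : ℕ) k, γ (j+1) k ≠ 0 →
      (∃ i, Real.sign (Δ j i k) = γ (j+1) k ∧ |Δ j i k| = ε (j+1) k) ∧
      (∀ i, Real.sign (Δ j i k) = γ (j+1) k → |Δ j i k| ≤ ε (j+1) k))
    (hε0 : ∀ (j : ℕ) k, γ (j+1) k = 0 → ε (j+1) k = 0)
    (hU : ∀ (j : ℕ) k, U (j+1) k = γ (j+1) k * ε (j+1) k)
    (hM : ∀ (j : ℕ) i k, M (j+1) i k = if 0 < Δ j i k * U (j+1) k then 1 else 0)
    (hden : ∀ (j : ℕ) i, ∑ k, |M (j+1) i k * U (j+1) k| ≠ 0)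
    (hlam : ∀ (j : ℕ) i,
      lam (j+1) i = (∑ k, |Δ j i k|) / (∑ k, |M (j+1) i k * U (j+1) k|))
    (hstep : ∀ (j : ℕ) i k, Δ (j+1) i k = lam (j+1) i * (M (j+1) i k * U (j+1) k)) :
    ∀ (i : Fin n) (k : Fin d) (j : ℕ), 1 ≤ j →
      M j i k = M 1 i k ∧ γ j k = γ 1 k :=
  stmt11_general n d Δ γ ε U M lam hγ hε hε0 hU hM hden hlam hstep
end

section
/- Let c > 0 and s > 0 be real constants and let (x_t)_{t≥1}, (y_t)_{t≥0} satisfy y_0 > max(c − s, 0), y_{t+1} = c·y_t/(s + y_t), and x_{t+1} = c·s/(s + y_t) for all t ≥ 0. Then x_t + y_t = c for every t ≥ 1, and the sequence (x_t) converges to min(c, s). -/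
/-!
The map `f u = c u / (s + u)` sends `(max (c - s) 0, ∞)` into itself and satisfies `f u ≤ u` there,
so `y` decreases to a fixed point of `f` in `[max (c - s) 0, ∞)`. The fixed points of `f` are `0`
and `c - s`, which forces the limit to be `max (c - s) 0`. Since `x (t + 1) + y (t + 1) = c`, the
sequence `x` tends to `c - max (c - s) 0 = min c s`.
-/

open Filter Function Topology

section

variable {c s u : ℝ}

lemma max_sub_zero_lt_div (hc : 0 < c) (hs : 0 < s) (hu : max (c - s) 0 < u) :
    max (c - s) 0 < c * u / (s + u) := by
  obtain ⟨hcu, hu⟩ := max_lt_iff.1 hu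
  have hsu : 0 < s + u := by linarith
  refine max_lt ?_ (by positivity)
  rw [lt_div_iff₀ hsu]
  nlinarith

lemma div_le_self_of_max_sub_zero_lt (hs : 0 < s) (hu : max (c - s) 0 < u) :
    c * u / (s + u) ≤ u := by
  obtain ⟨hcu, hu⟩ := max_lt_iff.1 hu
  rw [div_le_iff₀ (by linarith)]
  nlinarith

lemma eq_max_sub_zero_of_div_eq_self (hs : 0 < s) (hu : max (c - s) 0 ≤ u)
    (hfix : c * u / (s + u) = u) : u = max (c - s) 0 := by
  have hu0 : 0 ≤ u := (le_max_right _ _).trans hu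
  rw [div_eq_iff (by linarith)] at hfix
  have hroots : u * (s + u - c) = 0 := by linarith
  rcases mul_eq_zero.1 hroots with h | h
  · exact le_antisymm (h ▸ le_max_right _ _) hu
  · exact le_antisymm (by linarith [le_max_left (c - s) 0]) hu

variable {y : ℕ → ℝ}

lemma max_sub_zero_lt_of_eq_div (hc : 0 < c) (hs : 0 < s) (hy0 : max (c - s) 0 < y 0)
    (hyrec : ∀ t, y (t + 1) = c * y t / (s + y t)) (t : ℕ) : max (c - s) 0 < y t := by
  induction t with
  | zero => exact hy0
  | succ t ih => exact hyrec t ▸ max_sub_zero_lt_div hc hs ih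

lemma tendsto_max_sub_zero_of_eq_div (hc : 0 < c) (hs : 0 < s) (hy0 : max (c - s) 0 < y 0)
    (hyrec : ∀ t, y (t + 1) = c * y t / (s + y t)) :
    Tendsto y atTop (𝓝 (max (c - s) 0)) := by
  set f : ℝ → ℝ := fun u => c * u / (s + u)
  have hy_iter : ∀ t, y t = f^[t] (y 0) := by
    intro t
    induction t with
    | zero => rfl
    | succ t ih => rw [iterate_succ_apply', ← ih, hyrec]
  have hinv := max_sub_zero_lt_of_eq_div hc hs hy0 hyrec
  have hanti : Antitone y := antitone_nat_of_succ_le fun t =>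
    hyrec t ▸ div_le_self_of_max_sub_zero_lt hs (hinv t)
  have hbdd : BddBelow (Set.range y) := ⟨_, Set.forall_mem_range.2 fun t => (hinv t).le⟩
  have hlim : Tendsto y atTop (𝓝 (⨅ t, y t)) := tendsto_atTop_ciInf hanti hbdd
  have hlim_ge : max (c - s) 0 ≤ ⨅ t, y t := le_ciInf fun t => (hinv t).le
  have hfix : IsFixedPt f (⨅ t, y t) := by
    refine isFixedPt_of_tendsto_iterate ((tendsto_congr hy_iter).1 hlim) ?_
    have : s + ⨅ t, y t ≠ 0 := by linarith [le_max_right (c - s) 0]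
    fun_prop (disch := exact this)
  rwa [eq_max_sub_zero_of_div_eq_self hs hlim_ge hfix] at hlim

end

theorem stmt14 (c s : ℝ) (hc : 0 < c) (hs : 0 < s)
    (x y : ℕ → ℝ) (hy0 : max (c - s) 0 < y 0)
    (hyrec : ∀ t : ℕ, y (t+1) = c * y t / (s + y t))
    (hxrec : ∀ t : ℕ, x (t+1) = c * s / (s + y t)) :
    (∀ t : ℕ, 1 ≤ t → x t + y t = c) ∧ Tendsto x atTop (nhds (min c s)) := by
  have hy_pos t : 0 < y t :=
    (le_max_right _ _).trans_lt (max_sub_zero_lt_of_eq_div hc hs hy0 hyrec t)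
  have hsum t : x (t + 1) + y (t + 1) = c := by
    rw [hxrec, hyrec, ← add_div, ← mul_add, mul_div_cancel_right₀ _ (by linarith [hy_pos t])]
  refine ⟨fun t ht => Nat.succ_pred_eq_of_pos ht ▸ hsum _, ?_⟩
  have hx_eq : (fun t => x (t + 1)) = fun t => c - y (t + 1) := by
    funext t; linarith [hsum t]
  have hlim : c - max (c - s) 0 = min c s := by
    rw [← min_sub_sub_left, sub_sub_cancel, sub_zero, min_comm]
  rw [← tendsto_add_atTop_iff_nat 1, hx_eq, ← hlim]
  exact tendsto_const_nhds.sub ((tendsto_add_atTop_iff_nat 1).2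
    (tendsto_max_sub_zero_of_eq_div hc hs hy0 hyrec))
end

section
/- (Convergence of Iteration, Theorem 1.) Suppose that (i) the relative order of the rescalers is unchanged across iterations, i.e. for all i, i' ∈ {1,…,n} and all j, j' ≥ 1, λ^i(j) ≤ λ^{i'}(j) if and only if λ^i(j') ≤ λ^{i'}(j'); and (ii) for all i ≠ i' there exists a coordinate k with M^i_k(1) = 1 and M^{i'}_k(1) = 1 (any two mask supports overlap). Then for every i ∈ {1,…,n} the sequence (δ^i(j))_{j≥1} converges in ℝ^d; i.e., the n delta models converge to a uniquely determined set of n delta models. -/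
/-!
After one iteration every model has the form `λ^i • (M^i ⊙ U)` with fixed masks, so the next
unified model is `U` rescaled coordinatewise by the largest rescaler among the models active at
that coordinate; in particular the masks never change again. By (i) a single model `i₁` carries
the largest rescaler at every iteration. On its support `U` is multiplied by `λ^{i₁}`, so its
masked unified vector is the model itself and its rescaler is `1` from the second iteration on.
Hence all later rescalers are at most `1`, each `|U_k|` is nonincreasing and `U` converges, while
`U` is frozen on the support of `M^{i₁}`. By (ii) every mask meets that support, which keeps the
limits of the rescalers' denominators positive, so the rescalers and the models converge.
-/

open Filter Topology Finset

theorem Real.sign_mul_abs_s15 (x : ℝ) : Real.sign x * |x| = x := by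
  rcases lt_trichotomy x 0 with h | rfl | h
  · rw [Real.sign_of_neg h, abs_of_neg h]; ring
  · simp
  · rw [Real.sign_of_pos h, abs_of_pos h, one_mul]

theorem Real.sign_mul_of_pos_s15 {c : ℝ} (hc : 0 < c) (x : ℝ) :
    Real.sign (c * x) = Real.sign x := by
  rcases lt_trichotomy x 0 with h | rfl | h
  · rw [Real.sign_of_neg h, Real.sign_of_neg (mul_neg_of_pos_of_neg hc h)]
  · simp
  · rw [Real.sign_of_pos h, Real.sign_of_pos (mul_pos hc h)]

theorem exists_tendsto_of_forall_eq_mul_of_le_one {x : ℕ → ℝ}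
    (hx : ∀ n, ∃ a, 0 ≤ a ∧ a ≤ 1 ∧ x (n + 1) = a * x n) :
    ∃ L, Tendsto x atTop (𝓝 L) := by
  have hanti : Antitone fun n => |x n| := antitone_nat_of_succ_le fun n => by
    obtain ⟨a, ha₀, ha₁, hxn⟩ := hx n
    rw [hxn, abs_mul, abs_of_nonneg ha₀]
    exact mul_le_of_le_one_left (abs_nonneg _) ha₁
  have habs : Tendsto (fun n => |x n|) atTop (𝓝 (⨅ n, |x n|)) :=
    tendsto_atTop_ciInf hanti ⟨0, by rintro _ ⟨n, rfl⟩; exact abs_nonneg _⟩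
  have hsign : ∀ n, x n = Real.sign (x 0) * |x n| := by
    intro n
    induction n with
    | zero => exact (Real.sign_mul_abs_s15 _).symm
    | succ n ih =>
      obtain ⟨a, ha₀, -, hxn⟩ := hx n
      rw [hxn, abs_mul, abs_of_nonneg ha₀]
      nth_rewrite 1 [ih]
      ring
  exact ⟨_, (habs.const_mul _).congr fun n => (hsign n).symm⟩

theorem sign_mul_elect_eq_sup'_mul {ι : Type*} [Fintype ι] [Nonempty ι] {x t : ι → ℝ}
    {v γ ε : ℝ} (hγ : γ = Real.sign (∑ i, x i))
    (hε : γ ≠ 0 →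
      (∃ i, Real.sign (x i) = γ ∧ |x i| = ε) ∧ ∀ i, Real.sign (x i) = γ → |x i| ≤ ε)
    (ht : ∀ i, 0 ≤ t i) (hx : ∀ i, x i = t i * v) :
    γ * ε = univ.sup' univ_nonempty t * v := by
  set T := univ.sup' univ_nonempty t
  have hle : ∀ i, t i ≤ T := fun i => le_sup' t (mem_univ i)
  obtain ⟨i₁, -, hi₁ : T = t i₁⟩ := exists_mem_eq_sup' univ_nonempty t
  rcases eq_or_ne (T * v) 0 with h0 | h0
  · have hx0 : ∀ i, x i = 0 := by
      intro i
      rcases mul_eq_zero.mp h0 with hT | hv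
      · rw [hx, le_antisymm (hT ▸ hle i) (ht i), zero_mul]
      · rw [hx, hv, mul_zero]
    have hγ0 : γ = 0 := by simp [hγ, hx0]
    rw [h0, hγ0, zero_mul]
  obtain ⟨hT, hv⟩ := mul_ne_zero_iff.mp h0
  have hTpos : 0 < T := lt_of_le_of_ne ((ht i₁).trans (hle i₁)) hT.symm
  have hγv : γ = Real.sign v := by
    have hsum : ∑ i, x i = (∑ i, t i) * v := by simp only [hx, sum_mul]
    have hpos : 0 < ∑ i, t i :=
      hTpos.trans_le (hi₁ ▸ single_le_sum (fun i _ => ht i) (mem_univ i₁))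
    rw [hγ, hsum, Real.sign_mul_of_pos_s15 hpos]
  have hγne : γ ≠ 0 := by rwa [hγv, Ne, Real.sign_eq_zero_iff]
  obtain ⟨⟨i, -, hxi⟩, hεmax⟩ := hε hγne
  have hε_eq : ε = T * |v| := by
    refine le_antisymm ?_ ?_
    · rw [← hxi, hx, abs_mul, abs_of_nonneg (ht i)]
      exact mul_le_mul_of_nonneg_right (hle i) (abs_nonneg v)
    · have hxi₁ : x i₁ = T * v := by rw [hx, hi₁]
      have := hεmax i₁ (by rw [hxi₁, Real.sign_mul_of_pos_s15 hTpos, hγv])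
      rwa [hxi₁, abs_mul, abs_of_pos hTpos] at this
  rw [hε_eq, hγv, mul_left_comm, Real.sign_mul_abs_s15]

structure IsElectMaskRescaleStep {ι κ : Type*} [Fintype ι] [Fintype κ] (Δ : ι → κ → ℝ)
    (γ ε U : κ → ℝ) (M : ι → κ → ℝ) (lam : ι → ℝ) (Δ' : ι → κ → ℝ) : Prop where
  sign_eq : ∀ k, γ k = Real.sign (∑ i, Δ i k)
  elect : ∀ k, γ k ≠ 0 → (∃ i, Real.sign (Δ i k) = γ k ∧ |Δ i k| = ε k) ∧
    ∀ i, Real.sign (Δ i k) = γ k → |Δ i k| ≤ ε k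
  unified_eq : ∀ k, U k = γ k * ε k
  mask_eq : ∀ i k, M i k = if 0 < Δ i k * U k then 1 else 0
  masked_norm_ne_zero : ∀ i, ∑ k, |M i k * U k| ≠ 0
  rescaler_eq : ∀ i, lam i = (∑ k, |Δ i k|) / ∑ k, |M i k * U k|
  next_eq : ∀ i k, Δ' i k = lam i * (M i k * U k)

namespace IsElectMaskRescaleStep

variable {ι κ : Type*} [Fintype ι] [Fintype κ] {Δ Δ' Δ'' M M' : ι → κ → ℝ}
  {γ ε U γ' ε' U' : κ → ℝ} {lam lam' : ι → ℝ}

theorem mask_eq_zero_or_one (h : IsElectMaskRescaleStep Δ γ ε U M lam Δ') (i : ι) (k : κ) :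
    M i k = 0 ∨ M i k = 1 := by
  rw [h.mask_eq]
  split_ifs <;> simp

theorem unified_ne_zero_of_mask_eq_one (h : IsElectMaskRescaleStep Δ γ ε U M lam Δ') {i : ι}
    {k : κ} (hM : M i k = 1) : U k ≠ 0 := by
  rintro hU
  simp [h.mask_eq, hU] at hM

theorem exists_mask_eq_one (h : IsElectMaskRescaleStep Δ γ ε U M lam Δ') (i : ι) :
    ∃ k, M i k = 1 := by
  by_contra! hM
  refine h.masked_norm_ne_zero i (sum_eq_zero fun k _ => ?_)
  rw [(h.mask_eq_zero_or_one i k).resolve_right (hM k), zero_mul, abs_zero]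

theorem rescaler_pos (h : IsElectMaskRescaleStep Δ γ ε U M lam Δ') (i : ι) : 0 < lam i := by
  have hden : 0 < ∑ k, |M i k * U k| :=
    (sum_nonneg fun k _ => abs_nonneg _).lt_of_ne (h.masked_norm_ne_zero i).symm
  have hnum : 0 < ∑ k, |Δ i k| := by
    obtain ⟨k, hk⟩ := h.exists_mask_eq_one i
    refine (abs_pos.mpr fun hΔ => ?_).trans_le
      (single_le_sum (f := fun k => |Δ i k|) (fun k _ => abs_nonneg _) (mem_univ k))
    simp [h.mask_eq, hΔ] at hk
  rw [h.rescaler_eq]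
  exact div_pos hnum hden

theorem norm_next (h : IsElectMaskRescaleStep Δ γ ε U M lam Δ') (i : ι) :
    ∑ k, |Δ' i k| = ∑ k, |Δ i k| := by
  calc ∑ k, |Δ' i k| = lam i * ∑ k, |M i k * U k| := by
        simp only [h.next_eq, abs_mul (lam i), abs_of_pos (h.rescaler_pos i), mul_sum]
    _ = ∑ k, |Δ i k| := by rw [h.rescaler_eq, div_mul_cancel₀ _ (h.masked_norm_ne_zero i)]

variable [Nonempty ι]

theorem unified_next_eq (h₁ : IsElectMaskRescaleStep Δ γ ε U M lam Δ')
    (h₂ : IsElectMaskRescaleStep Δ' γ' ε' U' M' lam' Δ'') (k : κ) :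
    U' k = univ.sup' univ_nonempty (fun i => lam i * M i k) * U k := by
  rw [h₂.unified_eq]
  refine sign_mul_elect_eq_sup'_mul (h₂.sign_eq k) (h₂.elect k) (fun i => ?_) (fun i => ?_)
  · rcases h₁.mask_eq_zero_or_one i k with hM | hM <;> simp [hM, (h₁.rescaler_pos i).le]
  · rw [h₁.next_eq, mul_assoc]

theorem mask_next_eq (h₁ : IsElectMaskRescaleStep Δ γ ε U M lam Δ')
    (h₂ : IsElectMaskRescaleStep Δ' γ' ε' U' M' lam' Δ'') : M' = M := by
  ext i k
  rw [h₂.mask_eq, h₁.next_eq, h₁.unified_next_eq h₂]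
  rcases h₁.mask_eq_zero_or_one i k with hM | hM
  · simp [hM]
  · set T := univ.sup' univ_nonempty fun i => lam i * M i k
    have hT : lam i ≤ T :=
      calc lam i = lam i * M i k := by rw [hM, mul_one]
        _ ≤ T := le_sup' (fun i => lam i * M i k) (mem_univ i)
    have hpos : 0 < lam i * (M i k * U k) * (T * U k) := by
      rw [hM, one_mul, mul_mul_mul_comm]
      exact mul_pos (mul_pos (h₁.rescaler_pos i) ((h₁.rescaler_pos i).trans_le hT))
        (mul_self_pos.mpr (h₁.unified_ne_zero_of_mask_eq_one hM))
    rw [if_pos hpos, hM]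

theorem unified_next_eq_of_isMax (h₁ : IsElectMaskRescaleStep Δ γ ε U M lam Δ')
    (h₂ : IsElectMaskRescaleStep Δ' γ' ε' U' M' lam' Δ'') {i₁ : ι}
    (hmax : ∀ i, lam i ≤ lam i₁) {k : κ} (hk : M i₁ k = 1) : U' k = lam i₁ * U k := by
  rw [h₁.unified_next_eq h₂]
  congr 1
  refine le_antisymm (sup'_le _ _ fun i _ => ?_) ?_
  · rcases h₁.mask_eq_zero_or_one i k with hM | hM
    · simpa [hM] using (h₁.rescaler_pos i₁).le
    · simpa [hM] using hmax i
  · calc lam i₁ = lam i₁ * M i₁ k := by rw [hk, mul_one]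
      _ ≤ _ := le_sup' (fun i => lam i * M i k) (mem_univ i₁)

theorem rescaler_next_eq_one_of_isMax (h₁ : IsElectMaskRescaleStep Δ γ ε U M lam Δ')
    (h₂ : IsElectMaskRescaleStep Δ' γ' ε' U' M' lam' Δ'') {i₁ : ι}
    (hmax : ∀ i, lam i ≤ lam i₁) : lam' i₁ = 1 := by
  have hfix : ∀ k, M' i₁ k * U' k = Δ' i₁ k := by
    intro k
    rw [h₁.mask_next_eq h₂, h₁.next_eq]
    rcases h₁.mask_eq_zero_or_one i₁ k with hM | hM
    · simp [hM]
    · rw [hM, h₁.unified_next_eq_of_isMax h₂ hmax hM]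
      ring
  rw [h₂.rescaler_eq]
  simp only [hfix]
  exact div_self (by simpa only [hfix] using h₂.masked_norm_ne_zero i₁)

end IsElectMaskRescaleStep

def IsElectMaskRescaleIteration {ι κ : Type*} [Fintype ι] [Fintype κ] (Δ : ℕ → ι → κ → ℝ)
    (γ ε U : ℕ → κ → ℝ) (M : ℕ → ι → κ → ℝ) (lam : ℕ → ι → ℝ) : Prop :=
  ∀ j, IsElectMaskRescaleStep (Δ j) (γ (j + 1)) (ε (j + 1)) (U (j + 1)) (M (j + 1))
    (lam (j + 1)) (Δ (j + 1))

namespace IsElectMaskRescaleIteration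

variable {ι κ : Type*} [Fintype ι] [Fintype κ] {Δ M : ℕ → ι → κ → ℝ} {γ ε U : ℕ → κ → ℝ}
  {lam : ℕ → ι → ℝ}

theorem norm_eq (h : IsElectMaskRescaleIteration Δ γ ε U M lam) (j : ℕ) (i : ι) :
    ∑ k, |Δ j i k| = ∑ k, |Δ 0 i k| := by
  induction j with
  | zero => rfl
  | succ j ih => rw [(h j).norm_next, ih]

variable [Nonempty ι]

theorem mask_eq (h : IsElectMaskRescaleIteration Δ γ ε U M lam) (j : ℕ) : M (j + 1) = M 1 := by
  induction j with
  | zero => rfl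
  | succ j ih => rw [← ih]; exact (h j).mask_next_eq (h (j + 1))

variable {i₁ : ι}

theorem rescaler_le_one (h : IsElectMaskRescaleIteration Δ γ ε U M lam)
    (hmax : ∀ j i, lam (j + 1) i ≤ lam (j + 1) i₁) (j : ℕ) (i : ι) : lam (j + 2) i ≤ 1 :=
  (hmax (j + 1) i).trans_eq ((h j).rescaler_next_eq_one_of_isMax (h (j + 1)) (hmax j))

theorem unified_eq_of_mask_eq_one (h : IsElectMaskRescaleIteration Δ γ ε U M lam)
    (hmax : ∀ j i, lam (j + 1) i ≤ lam (j + 1) i₁) {k : κ} (hk : M 1 i₁ k = 1) (j : ℕ) :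
    U (j + 2) k = U 2 k := by
  induction j with
  | zero => rfl
  | succ j ih =>
    rw [← ih, (h (j + 1)).unified_next_eq_of_isMax (h (j + 2)) (hmax (j + 1)) (by rwa [h.mask_eq]),
      (h j).rescaler_next_eq_one_of_isMax (h (j + 1)) (hmax j), one_mul]

theorem exists_tendsto_unified (h : IsElectMaskRescaleIteration Δ γ ε U M lam)
    (hmax : ∀ j i, lam (j + 1) i ≤ lam (j + 1) i₁) (k : κ) :
    ∃ L, Tendsto (fun j => U (j + 2) k) atTop (𝓝 L) := by
  refine exists_tendsto_of_forall_eq_mul_of_le_one fun j =>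
    ⟨_, ?_, sup'_le _ _ fun i _ => ?_, (h (j + 1)).unified_next_eq (h (j + 2)) k⟩
  · obtain ⟨i⟩ := ‹Nonempty ι›
    refine le_sup'_of_le _ (mem_univ i) ?_
    rcases (h (j + 1)).mask_eq_zero_or_one i k with hM | hM <;>
      simp [hM, ((h (j + 1)).rescaler_pos i).le]
  · rcases (h (j + 1)).mask_eq_zero_or_one i k with hM | hM <;>
      simp [hM, h.rescaler_le_one hmax j i]

theorem exists_tendsto (h : IsElectMaskRescaleIteration Δ γ ε U M lam)
    (hmax : ∀ j i, lam (j + 1) i ≤ lam (j + 1) i₁) {i : ι} {k₀ : κ} (hk₀ : M 1 i k₀ = 1)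
    (hk₀' : M 1 i₁ k₀ = 1) : ∃ L, Tendsto (fun j => Δ j i) atTop (𝓝 L) := by
  choose V hV using h.exists_tendsto_unified hmax
  set D := ∑ k, |M 1 i k * V k|
  have hD : Tendsto (fun j => ∑ k, |M (j + 2) i k * U (j + 2) k|) atTop (𝓝 D) := by
    simp only [h.mask_eq]
    exact tendsto_finsetSum _ fun k _ => ((hV k).const_mul _).abs
  have hVk₀ : V k₀ = U 2 k₀ := tendsto_nhds_unique (hV k₀)
    (tendsto_const_nhds.congr fun j => (h.unified_eq_of_mask_eq_one hmax hk₀' j).symm)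
  have hDpos : 0 < D := by
    have hU : U 2 k₀ ≠ 0 := (h 1).unified_ne_zero_of_mask_eq_one (by rwa [h.mask_eq])
    refine (abs_pos.mpr ?_).trans_le
      (single_le_sum (f := fun k => |M 1 i k * V k|) (fun k _ => abs_nonneg _) (mem_univ k₀))
    rwa [hk₀, one_mul, hVk₀]
  have hlam : Tendsto (fun j => lam (j + 2) i) atTop (𝓝 ((∑ k, |Δ 0 i k|) / D)) :=
    (tendsto_const_nhds.div hD hDpos.ne').congr fun j => by
      rw [(h (j + 1)).rescaler_eq, h.norm_eq (j + 1)]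
      rfl
  refine ⟨fun k => (∑ k, |Δ 0 i k|) / D * (M 1 i k * V k), ?_⟩
  rw [← tendsto_add_atTop_iff_nat 2, tendsto_pi_nhds]
  intro k
  exact (hlam.mul ((hV k).const_mul _)).congr fun j => by
    rw [(h (j + 1)).next_eq, h.mask_eq (j + 1)]

end IsElectMaskRescaleIteration

theorem stmt15_general
    (n d : ℕ)
    (Δ : ℕ → Fin n → Fin d → ℝ)
    (γ ε U : ℕ → Fin d → ℝ)
    (M : ℕ → Fin n → Fin d → ℝ)
    (lam : ℕ → Fin n → ℝ)
    (hγ : ∀ (j : ℕ) k, γ (j+1) k = Real.sign (∑ i, Δ j i k))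
    (hε : ∀ (j : ℕ) k, γ (j+1) k ≠ 0 →
      (∃ i, Real.sign (Δ j i k) = γ (j+1) k ∧ |Δ j i k| = ε (j+1) k) ∧
      (∀ i, Real.sign (Δ j i k) = γ (j+1) k → |Δ j i k| ≤ ε (j+1) k))
    (hU : ∀ (j : ℕ) k, U (j+1) k = γ (j+1) k * ε (j+1) k)
    (hM : ∀ (j : ℕ) i k, M (j+1) i k = if 0 < Δ j i k * U (j+1) k then 1 else 0)
    (hden : ∀ (j : ℕ) i, ∑ k, |M (j+1) i k * U (j+1) k| ≠ 0)
    (hlam : ∀ (j : ℕ) i,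
      lam (j+1) i = (∑ k, |Δ j i k|) / (∑ k, |M (j+1) i k * U (j+1) k|))
    (hstep : ∀ (j : ℕ) i k, Δ (j+1) i k = lam (j+1) i * (M (j+1) i k * U (j+1) k))
    (horder : ∀ (i i' : Fin n) (j j' : ℕ), 1 ≤ j → 1 ≤ j' →
      (lam j i ≤ lam j i' ↔ lam j' i ≤ lam j' i'))
    (hoverlap : ∀ i i' : Fin n, i ≠ i' → ∃ k : Fin d, M 1 i k = 1 ∧ M 1 i' k = 1) :
    ∀ i : Fin n, ∃ L : Fin d → ℝ, Tendsto (fun j => Δ j i) atTop (nhds L) := by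
  intro i
  have h : IsElectMaskRescaleIteration Δ γ ε U M lam := fun j =>
    ⟨hγ j, hε j, hU j, hM j, hden j, hlam j, hstep j⟩
  have : Nonempty (Fin n) := ⟨i⟩
  obtain ⟨i₁, -, hi₁⟩ := exists_max_image univ (lam 1) univ_nonempty
  have hmax : ∀ j i, lam (j + 1) i ≤ lam (j + 1) i₁ := fun j i =>
    (horder i i₁ (j + 1) 1 (Nat.le_add_left 1 j) le_rfl).mpr (hi₁ i (mem_univ i))
  obtain ⟨k₀, hk₀, hk₀'⟩ : ∃ k, M 1 i k = 1 ∧ M 1 i₁ k = 1 := by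
    rcases eq_or_ne i i₁ with rfl | hne
    · obtain ⟨k, hk⟩ := (h 0).exists_mask_eq_one i
      exact ⟨k, hk, hk⟩
    · exact hoverlap i i₁ hne
  exact h.exists_tendsto hmax hk₀ hk₀'

theorem stmt15
    (n d : ℕ) (hn : 1 ≤ n) (hd : 1 ≤ d)
    (Δ : ℕ → Fin n → Fin d → ℝ)
    (γ ε U : ℕ → Fin d → ℝ)
    (M : ℕ → Fin n → Fin d → ℝ)
    (lam : ℕ → Fin n → ℝ)
    (hγ : ∀ (j : ℕ) k, γ (j+1) k = Real.sign (∑ i, Δ j i k))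
    (hε : ∀ (j : ℕ) k, γ (j+1) k ≠ 0 →
      (∃ i, Real.sign (Δ j i k) = γ (j+1) k ∧ |Δ j i k| = ε (j+1) k) ∧
      (∀ i, Real.sign (Δ j i k) = γ (j+1) k → |Δ j i k| ≤ ε (j+1) k))
    (hε0 : ∀ (j : ℕ) k, γ (j+1) k = 0 → ε (j+1) k = 0)
    (hU : ∀ (j : ℕ) k, U (j+1) k = γ (j+1) k * ε (j+1) k)
    (hM : ∀ (j : ℕ) i k, M (j+1) i k = if 0 < Δ j i k * U (j+1) k then 1 else 0)
    (hden : ∀ (j : ℕ) i, ∑ k, |M (j+1) i k * U (j+1) k| ≠ 0)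
    (hlam : ∀ (j : ℕ) i,
      lam (j+1) i = (∑ k, |Δ j i k|) / (∑ k, |M (j+1) i k * U (j+1) k|))
    (hstep : ∀ (j : ℕ) i k, Δ (j+1) i k = lam (j+1) i * (M (j+1) i k * U (j+1) k))
    (horder : ∀ (i i' : Fin n) (j j' : ℕ), 1 ≤ j → 1 ≤ j' →
      (lam j i ≤ lam j i' ↔ lam j' i ≤ lam j' i'))
    (hoverlap : ∀ i i' : Fin n, i ≠ i' → ∃ k : Fin d, M 1 i k = 1 ∧ M 1 i' k = 1) :
    ∀ i : Fin n, ∃ L : Fin d → ℝ, Tendsto (fun j => Δ j i) atTop (nhds L) :=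
  stmt15_general n d Δ γ ε U M lam hγ hε hU hM hden hlam hstep horder hoverlap
end
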